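/- arXiv:2104.09813 — 2 statements merged into one kernel-verified Lean document; each statement's English description precedes it below -/
import Mathlib

section
/- Generalized Bregman convexity inequality: for g = (1-α)g₁ + αg₂ with α ∈ [0,1], defining x⁺, x₁⁺, x₂⁺ by ∇h(x⁺) = ∇h(x) - g, ∇h(x₁⁺) = ∇h(x) - g₁, ∇h(x₂⁺) = ∇h(x) - g₂, we have D_h(x, x⁺) ≤ (1-α) D_h(x, x₁⁺) + α D_h(x, x₂⁺). -/
/-!
Three-point identity: `D(x, x₁⁺) = D(x, x⁺) + D(x⁺, x₁⁺) + ⟪∇h(x⁺) - ∇h(x₁⁺), x - x⁺⟫`, and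
`D(x⁺, x₁⁺) ≥ 0` by convexity, so `D(x, x⁺) + ⟪g₁ - g, x - x⁺⟫ ≤ D(x, x₁⁺)`, and likewise for
`x₂⁺`. Averaging with weights `1 - α` and `α` cancels the inner products since
`(1 - α) g₁ + α g₂ = g`.
-/

open Set

noncomputable section

abbrev E (d : ℕ) := EuclideanSpace ℝ (Fin d)

/-- Bregman divergence `D_f(x,y) = f x - f y - ⟪∇f(y), x - y⟫`. -/
def breg {d : ℕ} (f : E d → ℝ) (f' : E d → E d) (x y : E d) : ℝ :=
  f x - f y - inner ℝ (f' y) (x - y)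

theorem ConvexOn.add_le_of_hasFDerivAt {F : Type*} [NormedAddCommGroup F] [NormedSpace ℝ F]
    {s : Set F} {f : F → ℝ} {f' : F →L[ℝ] ℝ} (hf : ConvexOn ℝ s f) {z w : F}
    (hz : z ∈ s) (hw : w ∈ s) (hf' : HasFDerivAt f f' z) :
    f z + f' (w - z) ≤ f w := by
  set L : ℝ →ᵃ[ℝ] F := AffineMap.lineMap z w
  have hconv : ConvexOn ℝ (Icc 0 1) (f ∘ L) := by
    refine (hf.comp_affineMap L).subset (fun t ht => ?_) (convex_Icc 0 1)
    exact hf.1.segment_subset hz hw ((segment_eq_image_lineMap ℝ z w).symm ▸ ⟨t, ht, rfl⟩)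
  have hderiv : HasDerivAt (f ∘ L) (f' (w - z)) 0 := by
    have hL0 : L 0 = z := AffineMap.lineMap_apply_zero z w
    exact (hL0 ▸ hf').comp_hasDerivAt 0 AffineMap.hasDerivAt_lineMap
  have := hconv.le_slope_of_hasDerivAt (by simp) (by simp) one_pos hderiv
  simp only [slope_def_field, Function.comp_apply, L, AffineMap.lineMap_apply_one,
    AffineMap.lineMap_apply_zero, sub_zero, div_one] at this
  linarith

section Bregman

variable {d : ℕ} {f : E d → ℝ} {f' : E d → E d}

theorem breg_three_point (x y z : E d) :
    breg f f' x y = breg f f' x z + breg f f' z y + inner ℝ (f' z - f' y) (x - z) := by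
  simp only [breg, inner_sub_left, inner_sub_right]
  ring

theorem breg_nonneg {s : Set (E d)} (hf : ConvexOn ℝ s f) {x y : E d} (hx : x ∈ s) (hy : y ∈ s)
    (hf' : HasGradientAt f (f' y) y) : 0 ≤ breg f f' x y := by
  have := hf.add_le_of_hasFDerivAt hy hx hf'.hasFDerivAt
  simp only [InnerProductSpace.toDual_apply_apply] at this
  unfold breg; linarith

theorem breg_add_inner_le {s : Set (E d)} (hf : ConvexOn ℝ s f) (x : E d) {y z : E d}
    (hy : y ∈ s) (hz : z ∈ s) (hf' : HasGradientAt f (f' y) y) :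
    breg f f' x z + inner ℝ (f' z - f' y) (x - z) ≤ breg f f' x y := by
  linarith [breg_three_point (f := f) (f' := f') x y z, breg_nonneg hf hz hy hf']

end Bregman

theorem bregman_young_general_general {d : ℕ} (C : Set (E d))
    (h : E d → ℝ) (h' : E d → E d)
    (hhsc : StrictConvexOn ℝ (interior C) h)
    (hh' : ∀ x ∈ interior C, HasGradientAt h (h' x) x)
    (α : ℝ) (hα : α ∈ Set.Icc (0 : ℝ) 1)
    (g1 g2 : E d) (x xp x1 x2 : E d)
    (hxp : xp ∈ interior C)
    (hx1 : x1 ∈ interior C) (hx2 : x2 ∈ interior C)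
    (hup : h' xp = h' x - ((1 - α) • g1 + α • g2))
    (hu1 : h' x1 = h' x - g1) (hu2 : h' x2 = h' x - g2) :
    breg h h' x xp ≤ (1 - α) * breg h h' x x1 + α * breg h h' x x2 := by
  have hle1 := breg_add_inner_le hhsc.convexOn x hx1 hxp (hh' x1 hx1)
  have hle2 := breg_add_inner_le hhsc.convexOn x hx2 hxp (hh' x2 hx2)
  have hcancel : (1 - α) * inner ℝ (h' xp - h' x1) (x - xp)
      + α * inner ℝ (h' xp - h' x2) (x - xp) = 0 := by
    rw [← real_inner_smul_left, ← real_inner_smul_left, ← inner_add_left, hup, hu1, hu2]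
    convert inner_zero_left (x - xp) using 2
    module
  linarith [mul_le_mul_of_nonneg_left hle1 (sub_nonneg.2 hα.2), mul_le_mul_of_nonneg_left hle2 hα.1]

/-- Generalized Bregman convexity inequality: for
`g = (1-α)g₁ + αg₂` with `α ∈ [0,1]`, defining `x⁺, x₁⁺, x₂⁺` by
`∇h(x⁺) = ∇h(x) - g`, `∇h(x₁⁺) = ∇h(x) - g₁`, `∇h(x₂⁺) = ∇h(x) - g₂`, we have
`D_h(x, x⁺) ≤ (1-α) D_h(x, x₁⁺) + α D_h(x, x₂⁺)`. -/
theorem bregman_young_general {d : ℕ} (C : Set (E d)) (hC : IsClosed C) (hCconv : Convex ℝ C)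
    (h : E d → ℝ) (h' : E d → E d)
    (hh2 : ContDiffOn ℝ 2 h (interior C))
    (hhsc : StrictConvexOn ℝ (interior C) h)
    (hh' : ∀ x ∈ interior C, HasGradientAt h (h' x) x)
    (hblanket : ∀ y : E d, ∃! z, z ∈ interior C ∧
      IsMinOn (fun u => h u - (inner ℝ u y : ℝ)) C z)
    (α : ℝ) (hα : α ∈ Set.Icc (0 : ℝ) 1)
    (g1 g2 : E d) (x xp x1 x2 : E d)
    (hx : x ∈ interior C) (hxp : xp ∈ interior C)
    (hx1 : x1 ∈ interior C) (hx2 : x2 ∈ interior C)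
    (hup : h' xp = h' x - ((1 - α) • g1 + α • g2))
    (hu1 : h' x1 = h' x - g1) (hu2 : h' x2 = h' x - g2) :
    breg h h' x xp ≤ (1 - α) * breg h h' x x1 + α * breg h h' x x2 :=
  bregman_young_general_general C h h' hhsc hh' α hα g1 g2 x xp x1 x2 hxp hx1 hx2 hup hu1 hu2
end
end

section
/- Intermediate Hessian-comparison step: if ∇²h* is M-Lipschitz in operator norm, then for all x, y, v ∈ ℝ^d and λ ∈ [-1,1], D_{h*}(x + λv, x) ≤ λ² ( D_{h*}(y + v, y) + M(‖y - x‖ + ‖v‖)‖v‖² ). -/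
open Set
noncomputable section

open scoped RealInnerProductSpace

/-! Compare the two Bregman divergences along the segments `t ↦ x + t • (l • v)` and
`t ↦ y + t • v`, `t ∈ [0, 1]`. Both vanish to second order at `t = 0`, and their second
derivatives are `l² ⟪∇²h*(x + t l v) v, v⟫` and `⟪∇²h*(y + t v) v, v⟫`. The base points of the
two Hessians are at distance at most `‖y - x‖ + 2‖v‖`, so the Lipschitz bound makes the first
second derivative at most `l²` times the second plus `l² M (‖y - x‖ + 2‖v‖) ‖v‖²`. Integrating
twice over `[0, 1]` halves this error term, which gives the claim. -/

theorem nonneg_of_hasDerivAt_of_deriv_nonneg {φ φ' : ℝ → ℝ} {a b : ℝ}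
    (hφ : ∀ t, HasDerivAt φ (φ' t) t) (hφ' : ∀ t ∈ Icc a b, 0 ≤ φ' t) (ha : 0 ≤ φ a) :
    ∀ t ∈ Icc a b, 0 ≤ φ t := by
  have hmono : MonotoneOn φ (Icc a b) := by
    refine monotoneOn_of_deriv_nonneg (convex_Icc a b)
      (fun t _ => (hφ t).continuousAt.continuousWithinAt)
      (fun t _ => (hφ t).differentiableAt.differentiableWithinAt) fun t ht => ?_
    rw [interior_Icc] at ht
    rw [(hφ t).deriv]
    exact hφ' t (Ioo_subset_Icc_self ht)
  intro t ht
  exact ha.trans (hmono (left_mem_Icc.2 (ht.1.trans ht.2)) ht ht.1)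

theorem nonneg_of_hasDerivAt_of_second_deriv_nonneg {φ φ' φ'' : ℝ → ℝ} {a b : ℝ}
    (hφ : ∀ t, HasDerivAt φ (φ' t) t) (hφ' : ∀ t, HasDerivAt φ' (φ'' t) t)
    (hφ'' : ∀ t ∈ Icc a b, 0 ≤ φ'' t) (ha : 0 ≤ φ a) (ha' : 0 ≤ φ' a) :
    ∀ t ∈ Icc a b, 0 ≤ φ t :=
  nonneg_of_hasDerivAt_of_deriv_nonneg hφ
    (nonneg_of_hasDerivAt_of_deriv_nonneg hφ' hφ'' ha') ha

section Line

variable {F : Type*} [NormedAddCommGroup F] [InnerProductSpace ℝ F]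

theorem hasDerivAt_add_smul (p u : F) (t : ℝ) : HasDerivAt (fun s : ℝ => p + s • u) u t := by
  simpa using ((hasDerivAt_id t).smul_const u).const_add p

theorem HasGradientAt.hasDerivAt_comp_add_smul [CompleteSpace F] {f : F → ℝ} {g p u : F}
    {t : ℝ} (hf : HasGradientAt f g (p + t • u)) :
    HasDerivAt (fun s : ℝ => f (p + s • u)) ⟪g, u⟫ t := by
  exact hf.hasFDerivAt.comp_hasDerivAt t (hasDerivAt_add_smul p u t)

theorem HasFDerivAt.hasDerivAt_inner_comp_add_smul {g : F → F} {g' : F →L[ℝ] F} {p u : F}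
    {t : ℝ} (hg : HasFDerivAt g g' (p + t • u)) :
    HasDerivAt (fun s : ℝ => ⟪g (p + s • u), u⟫) ⟪g' u, u⟫ t := by
  simpa using (hg.comp_hasDerivAt t (hasDerivAt_add_smul p u t)).inner ℝ (hasDerivAt_const t u)

theorem inner_apply_sub_inner_apply_le {A B : F →L[ℝ] F} {u : F} {c : ℝ}
    (h : ‖A u - B u‖ ≤ c * ‖u‖) : ⟪A u, u⟫ - ⟪B u, u⟫ ≤ c * ‖u‖ ^ 2 := by
  calc ⟪A u, u⟫ - ⟪B u, u⟫ = ⟪A u - B u, u⟫ := (inner_sub_left _ _ _).symm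
    _ ≤ ‖A u - B u‖ * ‖u‖ := real_inner_le_norm _ _
    _ ≤ c * ‖u‖ * ‖u‖ := by gcongr
    _ = c * ‖u‖ ^ 2 := by ring

end Line

theorem norm_add_smul_smul_sub_add_smul_le {F : Type*} [SeminormedAddCommGroup F]
    [NormedSpace ℝ F] (x y v : F) {t l : ℝ} (ht : t ∈ Icc (0 : ℝ) 1) (hl : l ∈ Icc (-1 : ℝ) 1) :
    ‖(x + t • l • v) - (y + t • v)‖ ≤ ‖y - x‖ + 2 * ‖v‖ := by
  have hcoef : |t * (l - 1)| ≤ 2 := by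
    rw [abs_le]
    constructor <;> nlinarith [ht.1, ht.2, hl.1, hl.2]
  calc ‖(x + t • l • v) - (y + t • v)‖ = ‖(x - y) + (t * (l - 1)) • v‖ := by
        congr 1; module
    _ ≤ ‖x - y‖ + |t * (l - 1)| * ‖v‖ := by
        rw [← Real.norm_eq_abs, ← norm_smul]; exact norm_add_le _ _
    _ ≤ ‖y - x‖ + 2 * ‖v‖ := by
        rw [norm_sub_rev]; gcongr

section Bregman

variable {d : ℕ} {f : E d → ℝ} {f' : E d → E d} {f'' : E d → E d →L[ℝ] E d}

theorem breg_self (p : E d) : breg f f' p p = 0 := by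
  simp [breg]

theorem hasDerivAt_breg_add_smul (hgrad : ∀ a, HasGradientAt f (f' a) a) (p u : E d) (t : ℝ) :
    HasDerivAt (fun s : ℝ => breg f f' (p + s • u) p) (⟪f' (p + t • u), u⟫ - ⟪f' p, u⟫) t := by
  have hinner : HasDerivAt (fun s : ℝ => ⟪f' p, (p + s • u) - p⟫) ⟪f' p, u⟫ t := by
    simpa using (hasDerivAt_const t (f' p)).inner ℝ ((hasDerivAt_add_smul p u t).sub_const p)
  exact (((hgrad _).hasDerivAt_comp_add_smul).sub_const (f p)).sub hinner

theorem breg_le_of_hessian_le (hgrad : ∀ a, HasGradientAt f (f' a) a)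
    (hhess : ∀ a, HasFDerivAt f' (f'' a) a) (x y w v : E d) (c K : ℝ)
    (hle : ∀ t ∈ Icc (0 : ℝ) 1, ⟪f'' (x + t • w) w, w⟫ ≤ c * (⟪f'' (y + t • v) v, v⟫ + K)) :
    breg f f' (x + w) x ≤ c * (breg f f' (y + v) y + K / 2) := by
  set φ : ℝ → ℝ := fun t =>
    c * (breg f f' (y + t • v) y + K * t ^ 2 / 2) - breg f f' (x + t • w) x
  set φ' : ℝ → ℝ := fun t =>
    c * (⟪f' (y + t • v), v⟫ - ⟪f' y, v⟫ + K * t) - (⟪f' (x + t • w), w⟫ - ⟪f' x, w⟫)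
  have hφ : ∀ t, HasDerivAt φ (φ' t) t := fun t => by
    refine ((((hasDerivAt_breg_add_smul hgrad y v t).add
      (((hasDerivAt_pow 2 t).const_mul K).div_const 2)).const_mul c).sub
      (hasDerivAt_breg_add_smul hgrad x w t)).congr_deriv ?_
    simp only [φ']
    ring
  have hφ' : ∀ t, HasDerivAt φ'
      (c * (⟪f'' (y + t • v) v, v⟫ + K) - ⟪f'' (x + t • w) w, w⟫) t := fun t => by
    refine (((((hhess _).hasDerivAt_inner_comp_add_smul).sub_const _).add
      ((hasDerivAt_id t).const_mul K)).const_mul c).sub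
      (((hhess _).hasDerivAt_inner_comp_add_smul).sub_const _) |>.congr_deriv ?_
    simp
  have hφ_one := nonneg_of_hasDerivAt_of_second_deriv_nonneg hφ hφ'
    (fun t ht => sub_nonneg.2 (hle t ht)) (by simp [φ, breg_self]) (by simp [φ'])
    1 (right_mem_Icc.2 zero_le_one)
  simp only [φ, one_smul] at hφ_one
  linarith

end Bregman

theorem hessian_comparison_step_general {d : ℕ}
    (hstar : E d → ℝ) (hstar' : E d → E d) (hstar'' : E d → E d →L[ℝ] E d)
    (M : ℝ) (hM : 0 ≤ M)
    (hgrad : ∀ a : E d, HasGradientAt hstar (hstar' a) a)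
    (hhess : ∀ a : E d, HasFDerivAt hstar' (hstar'' a) a)
    (hlip : ∀ a b u : E d, ‖hstar'' a u - hstar'' b u‖ ≤ M * ‖a - b‖ * ‖u‖)
    (x y v : E d) (l : ℝ) (hl : l ∈ Set.Icc (-1 : ℝ) 1) :
    breg hstar hstar' (x + l • v) x
      ≤ l ^ 2 * (breg hstar hstar' (y + v) y + M * (‖y - x‖ + ‖v‖) * ‖v‖ ^ 2) := by
  set K := M * (‖y - x‖ + 2 * ‖v‖) * ‖v‖ ^ 2
  have hhess_le : ∀ t ∈ Icc (0 : ℝ) 1, ⟪hstar'' (x + t • l • v) (l • v), l • v⟫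
      ≤ l ^ 2 * (⟪hstar'' (y + t • v) v, v⟫ + K) := by
    intro t ht
    have hdiff := inner_apply_sub_inner_apply_le (hlip (x + t • l • v) (y + t • v) v)
    have hdist : M * ‖(x + t • l • v) - (y + t • v)‖ * ‖v‖ ^ 2 ≤ K := by
      have hnorm := norm_add_smul_smul_sub_add_smul_le x y v ht hl
      unfold K; gcongr
    simp only [map_smul, real_inner_smul_left, real_inner_smul_right]
    nlinarith [sq_nonneg l]
  calc breg hstar hstar' (x + l • v) x ≤ l ^ 2 * (breg hstar hstar' (y + v) y + K / 2) :=
        breg_le_of_hessian_le hgrad hhess x y (l • v) v (l ^ 2) K hhess_le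
    _ ≤ l ^ 2 * (breg hstar hstar' (y + v) y + M * (‖y - x‖ + ‖v‖) * ‖v‖ ^ 2) := by
        gcongr
        have hcross : 0 ≤ M * ‖y - x‖ * ‖v‖ ^ 2 := by positivity
        unfold K; nlinarith

/-- **Hessian-comparison step.** If `h*` is twice continuously
differentiable and convex with `∇²h*` `M`-Lipschitz in operator norm, then for
all `x, y, v ∈ ℝ^d` and `λ ∈ [-1,1]`,
`D_{h*}(x + λv, x) ≤ λ² (D_{h*}(y + v, y) + M(‖y - x‖ + ‖v‖)‖v‖²)`. -/
theorem hessian_comparison_step {d : ℕ}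
    (hstar : E d → ℝ) (hstar' : E d → E d) (hstar'' : E d → E d →L[ℝ] E d)
    (M : ℝ) (hM : 0 ≤ M)
    (hconv : ConvexOn ℝ Set.univ hstar)
    (hsmooth : ContDiff ℝ 2 hstar)
    (hgrad : ∀ a : E d, HasGradientAt hstar (hstar' a) a)
    (hhess : ∀ a : E d, HasFDerivAt hstar' (hstar'' a) a)
    (hlip : ∀ a b u : E d, ‖hstar'' a u - hstar'' b u‖ ≤ M * ‖a - b‖ * ‖u‖)
    (x y v : E d) (l : ℝ) (hl : l ∈ Set.Icc (-1 : ℝ) 1) :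
    breg hstar hstar' (x + l • v) x
      ≤ l ^ 2 * (breg hstar hstar' (y + v) y + M * (‖y - x‖ + ‖v‖) * ‖v‖ ^ 2) :=
  hessian_comparison_step_general hstar hstar' hstar'' M hM hgrad hhess hlip x y v l hl
end
end
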